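/- arXiv:2602.10613 — 2 statements merged into one kernel-verified Lean document; each statement's English description precedes it below -/
import Mathlib

section
/- Let A be the n×n matrix with A_{ij} = min(i,j), and for k ∈ {1,…,n} let θ_k = (2k-1)π/(2n+1). Then the vector x^{(k)} with entries x^{(k)}_r = sin(r θ_k) satisfies A x^{(k)} = λ_k x^{(k)} where λ_k = 1/(2(1 - cos θ_k)) = 1/(4 sin²(θ_k/2)). -/
/-!
The matrix `A = (min(i,j))` is the inverse of the second-difference matrix with a Dirichlet
condition at `0` and a Neumann condition at `n`: an Abel summation shows
`∑ⱼ min(i,j) (2fⱼ - fⱼ₋₁ - fⱼ₊₁) = fᵢ` whenever `f₀ = 0` and `fₙ₊₁ = fₙ`.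
The sequence `f_r = sin(rθ)` vanishes at `0`, its second difference is `2(1 - cos θ) f`,
and `θ = (2k-1)π/(2n+1)` is exactly the choice making `sin((n+1)θ) = sin(nθ)`.
-/

open Matrix Real Finset

theorem sum_min_mul_neg_second_diff {R : Type*} [CommRing R] (f : ℕ → R) (hf : f 0 = 0)
    {m n : ℕ} (hmn : m ≤ n) :
    ∑ s ∈ range n, ((min m (s + 1) : ℕ) : R) * (2 * f (s + 1) - f s - f (s + 2)) =
      f m - m * (f (n + 1) - f n) := by
  induction n, hmn using Nat.le_induction with
  | base =>
    rw [sum_congr rfl fun s hs => by rw [min_eq_right (by simp at hs; omega)]]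
    induction m with
    | zero => simp [hf]
    | succ m ih =>
      rw [sum_range_succ, ih]
      push_cast
      ring
  | succ n hmn ih =>
    rw [sum_range_succ, ih, min_eq_left (by omega)]
    ring

theorem sum_min_mul_neg_second_diff_of_neumann {R : Type*} [CommRing R] (f : ℕ → R)
    (hf : f 0 = 0) {n : ℕ} (hfn : f (n + 1) = f n) (i : Fin n) :
    ∑ j : Fin n, ((min (i.1 + 1) (j.1 + 1) : ℕ) : R) * (2 * f (j + 1) - f j - f (j + 2)) =
      f (i + 1) := by
  have := sum_min_mul_neg_second_diff f hf (m := i + 1) i.2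
  rw [hfn, sub_self, mul_zero, sub_zero] at this
  rw [← this, Fin.sum_univ_eq_sum_range
    (fun s => ((min (i.1 + 1) (s + 1) : ℕ) : R) * (2 * f (s + 1) - f s - f (s + 2)))]

theorem sin_neg_second_diff (r θ : ℝ) :
    2 * sin ((r + 1) * θ) - sin (r * θ) - sin ((r + 2) * θ) =
      2 * (1 - cos θ) * sin ((r + 1) * θ) := by
  rw [show r * θ = (r + 1) * θ - θ by ring, show (r + 2) * θ = (r + 1) * θ + θ by ring,
    sin_sub, sin_add]
  ring

theorem sin_succ_mul_eq_sin_mul {θ : ℝ} {n : ℕ} {k : ℤ}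
    (hθ : (2 * n + 1) * θ = (2 * k + 1) * π) :
    sin ((n + 1) * θ) = sin (n * θ) := by
  have : (n + 1) * θ = (π - n * θ) + k * (2 * π) := by linarith
  rw [this, sin_add_int_mul_two_pi, sin_pi_sub]

theorem two_mul_one_sub_cos (θ : ℝ) : 2 * (1 - cos θ) = 4 * sin (θ / 2) ^ 2 := by
  rw [sin_sq, cos_sq, mul_div_cancel₀ θ two_ne_zero]
  ring

theorem sine_eigenvectors_of_min_matrix_general (n : ℕ)
    (A : Matrix (Fin n) (Fin n) ℝ)
    (hA : ∀ i j : Fin n, A i j = min (i.1 + 1) (j.1 + 1))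
    (k : Fin n) :
    let θ : ℝ := (2 * (k.1 + 1) - 1) * Real.pi / (2 * n + 1)
    let x : Fin n → ℝ := fun r => Real.sin ((r.1 + 1) * θ)
    let lam : ℝ := 1 / (2 * (1 - Real.cos θ))
    A.mulVec x = lam • x ∧ lam = 1 / (4 * Real.sin (θ / 2) ^ 2) := by
  intro θ x lam
  have hθ : θ = (2 * k.1 + 1) * π / (2 * n + 1) := by simp only [θ]; ring
  have hθ_pos : 0 < θ := by rw [hθ]; positivity
  have hθ_lt : θ < 2 * π := by
    have : (k.1 : ℝ) + 1 ≤ n := by exact_mod_cast k.2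
    rw [hθ, div_lt_iff₀ (by positivity)]; nlinarith [pi_pos]
  have hcos : 1 - cos θ ≠ 0 := fun h =>
    hθ_pos.ne' ((cos_eq_one_iff_of_lt_of_lt (by linarith) hθ_lt).1 (by linarith))
  have hbdy : sin ((n + 1) * θ) = sin (n * θ) :=
    sin_succ_mul_eq_sin_mul (k := k.1) (by rw [hθ]; push_cast; field_simp)
  refine ⟨funext fun i => ?_, by simp only [lam]; rw [two_mul_one_sub_cos]⟩
  have hrow := sum_min_mul_neg_second_diff_of_neumann (fun r => sin (r * θ)) (by simp)
    (by exact_mod_cast hbdy) i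
  simp only [Nat.cast_add, Nat.cast_ofNat, Nat.cast_one, sin_neg_second_diff] at hrow
  simp only [mulVec, dotProduct, Pi.smul_apply, smul_eq_mul, hA, lam, x]
  rw [← hrow, mul_sum]
  refine sum_congr rfl fun j _ => ?_
  field_simp

/-- The discrete sine vectors `x_r = sin(r θ_k)` with
`θ_k = (2k-1)π/(2n+1)` are eigenvectors of the matrix `A_{ij} = min(i,j)`
with eigenvalue `1/(2(1 - cos θ_k)) = 1/(4 sin²(θ_k/2))`. -/
theorem sine_eigenvectors_of_min_matrix (n : ℕ) (hn : 0 < n)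
    (A : Matrix (Fin n) (Fin n) ℝ)
    (hA : ∀ i j : Fin n, A i j = min (i.1 + 1) (j.1 + 1))
    (k : Fin n) :
    let θ : ℝ := (2 * (k.1 + 1) - 1) * Real.pi / (2 * n + 1)
    let x : Fin n → ℝ := fun r => Real.sin ((r.1 + 1) * θ)
    let lam : ℝ := 1 / (2 * (1 - Real.cos θ))
    A.mulVec x = lam • x ∧ lam = 1 / (4 * Real.sin (θ / 2) ^ 2) :=
  sine_eigenvectors_of_min_matrix_general n A hA k
end

section
/- Fix m ≤ d. Let H_{≤m} be the design matrix using only basis indicators indexed by subsets s with 1 ≤ |s| ≤ m. Then (H_{≤m} H_{≤m}ᵀ)_{ab} = ∑_{i=1}^n ∑_{r=1}^{min(m, t_i)} C(t_i, r), where t_i = |{ j : min(x_{aj}, x_{bj}) ≥ x_{ij} }| and C(t, r) is the binomial coefficient. -/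
open Matrix Finset

lemma aux_count {d m : ℕ} (T : Finset (Fin d)) :
    ∑ s : {s : Finset (Fin d) // 1 ≤ s.card ∧ s.card ≤ m},
        (if s.1 ⊆ T then (1 : ℝ) else 0)
      = ∑ r ∈ Finset.Icc 1 (min m T.card), (T.card.choose r : ℝ) := by
  classical
  have h1 : ∑ s : {s : Finset (Fin d) // 1 ≤ s.card ∧ s.card ≤ m},
        (if s.1 ⊆ T then (1 : ℝ) else 0)
      = ∑ s ∈ Finset.univ.filter (fun s : Finset (Fin d) => 1 ≤ s.card ∧ s.card ≤ m),
          (if s ⊆ T then (1 : ℝ) else 0) := by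
    rw [Finset.sum_subtype (Finset.univ.filter (fun s : Finset (Fin d) => 1 ≤ s.card ∧ s.card ≤ m))]
    intro s; simp
  rw [h1, ← Finset.sum_filter]
  have h2 : (Finset.univ.filter (fun s : Finset (Fin d) => 1 ≤ s.card ∧ s.card ≤ m)).filter
        (fun s => s ⊆ T)
      = (Finset.Icc 1 (min m T.card)).biUnion (fun r => T.powersetCard r) := by
    ext s
    simp only [Finset.mem_filter, Finset.mem_univ, true_and, Finset.mem_biUnion,
      Finset.mem_Icc, Finset.mem_powersetCard, le_min_iff]
    constructor
    · rintro ⟨⟨h1', h2'⟩, h3⟩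
      exact ⟨s.card, ⟨h1', h2', Finset.card_le_card h3⟩, h3, rfl⟩
    · rintro ⟨r, ⟨hr1, hr2, _⟩, hsT, hc⟩
      exact ⟨⟨hc ▸ hr1, hc ▸ hr2⟩, hsT⟩
  rw [h2, Finset.sum_const, Finset.card_biUnion]
  · simp [Finset.card_powersetCard]
  · intro r hr q hq hrq
    simp only [Finset.disjoint_left, Finset.mem_powersetCard]
    rintro s ⟨_, rfl⟩ ⟨_, h⟩; exact hrq h

/-- The Gram matrix of the interaction-order-truncated HAL design
(columns indexed by pairs `(i, s)` with `1 ≤ |s| ≤ m`) has entries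
`∑_i ∑_{r=1}^{min(m,t_i)} C(t_i, r)`. -/
theorem truncated_hal_gram_closed_form (n d m : ℕ) (hn : 0 < n) (hd : 0 < d)
    (hm1 : 1 ≤ m) (hmd : m ≤ d)
    (x : Fin n → Fin d → ℝ)
    (H : Matrix (Fin n) (Fin n × {s : Finset (Fin d) // 1 ≤ s.card ∧ s.card ≤ m}) ℝ)
    (hH : ∀ (a : Fin n) (c : Fin n × {s : Finset (Fin d) // 1 ≤ s.card ∧ s.card ≤ m}),
      H a c = ∏ j ∈ c.2.1, (if x c.1 j ≤ x a j then (1 : ℝ) else 0))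
    (a b : Fin n) :
    (H * Hᵀ) a b
      = ∑ i : Fin n,
          ∑ r ∈ Finset.Icc 1
              (min m (Finset.univ.filter
                (fun j : Fin d => x i j ≤ min (x a j) (x b j))).card),
            ((Finset.univ.filter
              (fun j : Fin d => x i j ≤ min (x a j) (x b j))).card.choose r : ℝ) := by
  classical
  rw [Matrix.mul_apply]
  rw [Fintype.sum_prod_type]
  refine Finset.sum_congr rfl fun i _ => ?_
  set T : Finset (Fin d) := Finset.univ.filter (fun j : Fin d => x i j ≤ min (x a j) (x b j)) with hT
  have key : ∀ s : {s : Finset (Fin d) // 1 ≤ s.card ∧ s.card ≤ m},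
      H a (i, s) * Hᵀ (i, s) b = if s.1 ⊆ T then (1 : ℝ) else 0 := by
    intro s
    rw [Matrix.transpose_apply, hH, hH, ← Finset.prod_mul_distrib]
    have : ∀ j ∈ s.1, (if x i j ≤ x a j then (1:ℝ) else 0) * (if x i j ≤ x b j then (1:ℝ) else 0)
        = if j ∈ T then (1:ℝ) else 0 := by
      intro j _
      simp only [hT, Finset.mem_filter, Finset.mem_univ, true_and, le_min_iff, ite_mul, one_mul,
        zero_mul]
      by_cases h1 : x i j ≤ x a j <;> by_cases h2 : x i j ≤ x b j <;> simp [h1, h2]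
    rw [Finset.prod_congr rfl this, Finset.prod_boole]
    simp [Finset.subset_iff]
  rw [Finset.sum_congr rfl (fun s _ => key s)]
  exact aux_count T
end
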